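/- Let S = { (⌊⌊w⌋⌋, w), (⌊uv⌋, ⌊v⌋⌊u⌋), (⌊w⌋w, 1), (w⌊w⌋, 1) : w ∈ 𝔐(X), u,v ∈ 𝔐(X)\{1} }. For rules α, β ∈ S with q₁|_{lhs(α)} = q₂|_{lhs(β)}, if the placements (lhs(α), q₁) and (lhs(β), q₂) are intersecting, then q₁|_{rhs(α)} and q₂|_{rhs(β)} are joinable under Π_S. -/
import Mathlib


namespace OpMon

/-- Letters of bracketed words: either a variable or a bracketed word. -/
inductive Letter (X : Type) : Type
  | of : X → Letter X
  | br : List (Letter X) → Letter X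

/-- The free operated monoid `𝔐(X)`, modeled as lists of letters (free monoid on letters). -/
abbrev M (X : Type) := List (Letter X)

/-- The operator `⌊ ⌋` on `𝔐(X)`. -/
def L {X : Type} (w : M X) : M X := [Letter.br w]

mutual
  /-- Substitute each variable by a word (letter version). -/
  def bindL {Y Z : Type} : Letter Y → (Y → M Z) → M Z
    | .of y, f => f y
    | .br w, f => [.br (bindW w f)]
  /-- Substitute each variable by a word (word version). -/
  def bindW {Y Z : Type} : M Y → (Y → M Z) → M Z
    | [], _ => []
    | a :: as, f => bindL a f ++ bindW as f
end

mutual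
  /-- Count occurrences of variables satisfying `p` (letter version). -/
  def cntL {Y : Type} (p : Y → Bool) : Letter Y → ℕ
    | .of y => if p y then 1 else 0
    | .br w => cntW p w
  /-- Count occurrences of variables satisfying `p` (word version). -/
  def cntW {Y : Type} (p : Y → Bool) : M Y → ℕ
    | [] => 0
    | a :: as => cntL p a + cntW p as
end

/-- The star letter `⋆`, modeled as `none`. -/
def starW {X : Type} : M (Option X) := [Letter.of none]

/-- `q` is a `⋆`-bracketed word: exactly one occurrence of `⋆`. -/
def IsStar {X : Type} (q : M (Option X)) : Prop :=
  cntW (fun o => o.isNone) q = 1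

/-- Substitution `q|_u` of `u` for `⋆`. -/
def sub {X : Type} (q : M (Option X)) (u : M X) : M X :=
  bindW q (fun o => Option.elim o u (fun x => [Letter.of x]))

/-- Embed `𝔐(X)` into `𝔐(X ∪ {⋆})`. -/
def emb {X : Type} (w : M X) : M (Option X) :=
  bindW w (fun x => [Letter.of (some x)])

/-- Substitute a `⋆`-word `r` for the `⋆` of `q`, yielding a word on `X ∪ {⋆}`. -/
def subS {X : Type} (q r : M (Option X)) : M (Option X) :=
  bindW q (fun o => Option.elim o r (fun x => [Letter.of (some x)]))

/-- `p` is a `(⋆₁,⋆₂)`-bracketed word (⋆₁ = `none`, ⋆₂ = `some none`). -/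
def IsStar2 {X : Type} (p : M (Option (Option X))) : Prop :=
  cntW (fun o => o.isNone) p = 1 ∧
  cntW (fun o => match o with | some none => true | _ => false) p = 1

/-- Substitution `p|_{u₁,u₂}`. -/
def sub2 {X : Type} (p : M (Option (Option X))) (u₁ u₂ : M X) : M X :=
  bindW p (fun o => match o with
    | none => u₁
    | some none => u₂
    | some (some x) => [Letter.of x])

/-- Substitution `p|_{u₁,⋆₂}`, a `⋆`-word. -/
def sub2L {X : Type} (p : M (Option (Option X))) (u₁ : M X) : M (Option X) :=
  bindW p (fun o => match o with
    | none => emb u₁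
    | some none => [Letter.of none]
    | some (some x) => [Letter.of (some x)])

/-- Substitution `p|_{⋆₁,u₂}`, a `⋆`-word. -/
def sub2R {X : Type} (p : M (Option (Option X))) (u₂ : M X) : M (Option X) :=
  bindW p (fun o => match o with
    | none => [Letter.of none]
    | some none => emb u₂
    | some (some x) => [Letter.of (some x)])

/-- `R^c`. -/
def Rc {X : Type} (R : Set (M X × M X)) : Set (M X × M X) :=
  {p | ∃ q a b, IsStar q ∧ (a, b) ∈ R ∧ p = (sub q a, sub q b)}

/-- Inverse relation `R⁻¹`. -/
def relInv {X : Type} (R : Set (M X × M X)) : Set (M X × M X) :=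
  {p | (p.2, p.1) ∈ R}

/-- Closure under right mult. (C1), left mult. (C2), and the operator (C3). -/
def Closed {X : Type} (S : Set (M X × M X)) : Prop :=
  ∀ a b, (a, b) ∈ S → ∀ c : M X,
    (a ++ c, b ++ c) ∈ S ∧ (c ++ a, c ++ b) ∈ S ∧ (L a, L b) ∈ S

/-- Composition of relations. -/
def relComp {X : Type} (R S : Set (M X × M X)) : Set (M X × M X) :=
  {p | ∃ c, (p.1, c) ∈ R ∧ (c, p.2) ∈ S}

/-- `relPow R n = R^(n+1)`. -/
def relPow {X : Type} (R : Set (M X × M X)) : ℕ → Set (M X × M X)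
  | 0 => R
  | n + 1 => relComp (relPow R n) R

/-- Operated congruence. -/
def IsOpCong {X : Type} (T : Set (M X × M X)) : Prop :=
  (∀ a, (a, a) ∈ T) ∧ (∀ a b, (a, b) ∈ T → (b, a) ∈ T) ∧
  (∀ a b c, (a, b) ∈ T → (b, c) ∈ T → (a, c) ∈ T) ∧ Closed T

/-- The operated congruence `⟨R⟩` generated by `R`. -/
def ocong {X : Type} (R : Set (M X × M X)) : Set (M X × M X) :=
  ⋂₀ {T | IsOpCong T ∧ R ⊆ T}

/-- Equivalence relation (as a set of pairs). -/
def IsEqv {X : Type} (T : Set (M X × M X)) : Prop :=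
  (∀ a, (a, a) ∈ T) ∧ (∀ a b, (a, b) ∈ T → (b, a) ∈ T) ∧
  (∀ a b c, (a, b) ∈ T → (b, c) ∈ T → (a, c) ∈ T)

/-- The equivalence `T^e` generated by `T`. -/
def eqgen {X : Type} (T : Set (M X × M X)) : Set (M X × M X) :=
  ⋂₀ {E | IsEqv E ∧ T ⊆ E}

/-- A monomial order: a well-founded linear order compatible with the operations. -/
def IsMonomialOrder {X : Type} (lt : M X → M X → Prop) : Prop :=
  WellFounded lt ∧
  (∀ a b, a = b ∨ lt a b ∨ lt b a) ∧
  (∀ a b c, lt a b → lt b c → lt a c) ∧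
  (∀ u v w, lt u v → lt (u ++ w) (v ++ w) ∧ lt (w ++ u) (w ++ v) ∧ lt (L u) (L v))

/-- The term-rewriting system `Π_S`. -/
def PiS {X : Type} (lt : M X → M X → Prop) (S : Set (M X × M X)) : Set (M X × M X) :=
  {p | ∃ q t v, IsStar q ∧ ((t, v) ∈ S ∨ (v, t) ∈ S) ∧ lt v t ∧ p = (sub q t, sub q v)}

/-- One-step rewriting. -/
def Rew {X : Type} (lt : M X → M X → Prop) (S : Set (M X × M X)) (a b : M X) : Prop :=
  (a, b) ∈ PiS lt S

/-- Joinability under `Π_S`. -/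
def Joinable {X : Type} (lt : M X → M X → Prop) (S : Set (M X × M X)) (f g : M X) : Prop :=
  ∃ h, Relation.ReflTransGen (Rew lt S) f h ∧ Relation.ReflTransGen (Rew lt S) g h

/-- Termination of `Π_S`. -/
def Terminating {X : Type} (lt : M X → M X → Prop) (S : Set (M X × M X)) : Prop :=
  ¬ ∃ f : ℕ → M X, ∀ n, Rew lt S (f n) (f (n + 1))

/-- Confluence of `Π_S`. -/
def Confluent {X : Type} (lt : M X → M X → Prop) (S : Set (M X × M X)) : Prop :=
  ∀ f g h, Relation.ReflTransGen (Rew lt S) f g → Relation.ReflTransGen (Rew lt S) f h →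
    Joinable lt S g h

/-- Irreducible elements: `𝔐(X) \ Dom(Π_S)`. -/
def Irr {X : Type} (lt : M X → M X → Prop) (S : Set (M X × M X)) : Set (M X) :=
  {f | ∀ g, ¬ Rew lt S f g}

/-- Predecessors of `a`. -/
def Pre {X : Type} (lt : M X → M X → Prop) (S : Set (M X × M X)) (a : M X) : Set (M X) :=
  {f | Relation.ReflTransGen (Rew lt S) f a}

/-- `W` is a section of `⟨S⟩`: every congruence class meets `W` in exactly one element. -/
def IsSection {X : Type} (S : Set (M X × M X)) (W : Set (M X)) : Prop :=
  ∀ a : M X, ∃! w, w ∈ W ∧ (a, w) ∈ ocong S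

/-- Separated placements `(u₁,q₁)`, `(u₂,q₂)` in `w`. -/
def Separated {X : Type} (u₁ : M X) (q₁ : M (Option X)) (u₂ : M X) (q₂ : M (Option X))
    (w : M X) : Prop :=
  ∃ p, IsStar2 p ∧ q₁ = sub2R p u₂ ∧ q₂ = sub2L p u₁ ∧ w = sub2 p u₁ u₂

/-- Nested placements: one context is a subcontext of the other. -/
def Nested {X : Type} (q₁ q₂ : M (Option X)) : Prop :=
  ∃ q, IsStar q ∧ (q₂ = subS q₁ q ∨ q₁ = subS q₂ q)

/-- Intersecting placements `(u₁,q₁)`, `(u₂,q₂)` in `w`. -/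
def Intersecting {X : Type} (w u₁ : M X) (q₁ : M (Option X)) (u₂ : M X)
    (q₂ : M (Option X)) : Prop :=
  ∃ q a b c, IsStar q ∧ a ≠ ([] : M X) ∧ b ≠ ([] : M X) ∧ c ≠ ([] : M X) ∧
    w = sub q (a ++ b ++ c) ∧
    ((q₁ = subS q (starW ++ emb c) ∧ q₂ = subS q (emb a ++ starW)) ∨
     (q₁ = subS q (emb a ++ starW) ∧ q₂ = subS q (starW ++ emb c)))

/-- Defining relations of the free `∗`-monoid. -/
def SStar (X : Type) : Set (M X × M X) :=
  {p | (∃ w : M X, p = (L (L w), w)) ∨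
       (∃ u v : M X, u ≠ [] ∧ v ≠ [] ∧ p = (L (u ++ v), L v ++ L u)) ∨
       p = (L [], [])}

/-- Defining relations of the free group. -/
def SGrp (X : Type) : Set (M X × M X) :=
  {p | (∃ w : M X, p = (L (L w), w)) ∨
       (∃ u v : M X, u ≠ [] ∧ v ≠ [] ∧ p = (L (u ++ v), L v ++ L u)) ∨
       (∃ w : M X, p = (L w ++ w, [])) ∨
       (∃ w : M X, p = (w ++ L w, []))}



section Aux
variable {X : Type}

theorem bindW_append {Y Z : Type} (u v : M Y) (f : Y → M Z) :
    bindW (u ++ v) f = bindW u f ++ bindW v f := by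
  induction u with
  | nil => rfl
  | cons a as ih => simp [bindW, ih]

mutual
theorem bindL_bindL {Y Z W : Type} (l : Letter Y) (f : Y → M Z) (g : Z → M W) :
    bindW (bindL l f) g = bindL l (fun y => bindW (f y) g) := by
  cases l with
  | of y => rfl
  | br w => simp [bindL, bindW, bindW_bindW w f g]
theorem bindW_bindW {Y Z W : Type} (q : M Y) (f : Y → M Z) (g : Z → M W) :
    bindW (bindW q f) g = bindW q (fun y => bindW (f y) g) := by
  cases q with
  | nil => rfl
  | cons a as => simp [bindW, bindW_append, bindL_bindL a f g, bindW_bindW as f g]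
end

mutual
theorem bindL_id {Y : Type} (l : Letter Y) : bindL l (fun y => [Letter.of y]) = [l] := by
  cases l with
  | of y => rfl
  | br w => simp [bindL, bindW_id w]
theorem bindW_id {Y : Type} (w : M Y) : bindW w (fun y => [Letter.of y]) = w := by
  cases w with
  | nil => rfl
  | cons a as => simp [bindW, bindL_id a, bindW_id as]
end

theorem cntW_append {Y : Type} (p : Y → Bool) (u v : M Y) :
    cntW p (u ++ v) = cntW p u + cntW p v := by
  induction u with
  | nil => simp [cntW]
  | cons a as ih => simp [cntW, ih]; omega

mutual
theorem cnt_embL (l : Letter X) :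
    cntW (fun o : Option X => o.isNone) (bindL l (fun x => [Letter.of (some x)])) = 0 := by
  cases l with
  | of x => simp [bindL, cntW, cntL]
  | br w => simp [bindL, cntW, cntL, cnt_embW' w]
theorem cnt_embW' (w : M X) :
    cntW (fun o : Option X => o.isNone) (bindW w (fun x => [Letter.of (some x)])) = 0 := by
  cases w with
  | nil => simp [bindW, cntW]
  | cons a as =>
    show cntW _ (bindL a _ ++ bindW as _) = 0
    rw [cntW_append, cnt_embL a, cnt_embW' as]
end

theorem cnt_embW (w : M X) : cntW (fun o : Option X => o.isNone) (emb w) = 0 :=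
  cnt_embW' w

mutual
theorem cnt_subSL (l : Letter (Option X)) (r : M (Option X)) :
    cntW (fun o => o.isNone)
        (bindL l (fun o => Option.elim o r (fun x => [Letter.of (some x)]))) =
      cntL (fun o => o.isNone) l * cntW (fun o => o.isNone) r := by
  cases l with
  | of o => cases o with
    | none => simp [bindL, cntL]
    | some x => simp [bindL, cntW, cntL]
  | br w => simp [bindL, cntW, cntL, cnt_subSW' w r]
theorem cnt_subSW' (q r : M (Option X)) :
    cntW (fun o => o.isNone)
        (bindW q (fun o => Option.elim o r (fun x => [Letter.of (some x)]))) =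
      cntW (fun o => o.isNone) q * cntW (fun o => o.isNone) r := by
  cases q with
  | nil => simp [bindW, cntW]
  | cons a as =>
    show cntW _ (bindL a _ ++ bindW as _) = _
    rw [cntW_append, cnt_subSL a r, cnt_subSW' as r, cntW]
    ring
end

theorem cnt_subSW (q r : M (Option X)) :
    cntW (fun o => o.isNone) (subS q r) =
      cntW (fun o => o.isNone) q * cntW (fun o => o.isNone) r :=
  cnt_subSW' q r

theorem sub_subS (q r : M (Option X)) (u : M X) : sub (subS q r) u = sub q (sub r u) := by
  unfold sub subS
  rw [bindW_bindW]
  congr 1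
  funext o
  cases o with
  | none => rfl
  | some x => simp [bindW, bindL]

mutual
theorem sub_embL (l : Letter X) (u : M X) :
    bindW (bindL l (fun x => [Letter.of (some x)]))
      (fun o => Option.elim o u (fun x => [Letter.of x])) = [l] := by
  cases l with
  | of x => simp [bindL, bindW]
  | br w => simp [bindL, bindW, sub_embW' w u]
theorem sub_embW' (w : M X) (u : M X) :
    bindW (bindW w (fun x => [Letter.of (some x)]))
      (fun o => Option.elim o u (fun x => [Letter.of x])) = w := by
  cases w with
  | nil => rfl
  | cons a as =>
    show bindW (bindL a _ ++ bindW as _) _ = _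
    rw [bindW_append, sub_embL a u, sub_embW' as u, List.singleton_append]
end

theorem sub_embW (w : M X) (u : M X) : sub (emb w) u = w := sub_embW' w u

theorem sub_append (q₁ q₂ : M (Option X)) (u : M X) :
    sub (q₁ ++ q₂) u = sub q₁ u ++ sub q₂ u := bindW_append _ _ _

theorem sub_star (u : M X) : sub starW u = u := by
  simp [sub, starW, bindW, bindL]

theorem sub_ctx (q : M (Option X)) (p s u : M X) :
    sub (subS q (emb p ++ starW ++ emb s)) u = sub q (p ++ u ++ s) := by
  rw [sub_subS, sub_append, sub_append, sub_embW, sub_embW, sub_star]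

theorem sub_ctxL (q : M (Option X)) (c u : M X) :
    sub (subS q (starW ++ emb c)) u = sub q (u ++ c) := by
  rw [sub_subS, sub_append, sub_embW, sub_star]

theorem sub_ctxR (q : M (Option X)) (a u : M X) :
    sub (subS q (emb a ++ starW)) u = sub q (a ++ u) := by
  rw [sub_subS, sub_append, sub_embW, sub_star]

theorem isStar_ctx {q : M (Option X)} (hq : IsStar q) (p s : M X) :
    IsStar (subS q (emb p ++ starW ++ emb s)) := by
  unfold IsStar at *
  rw [cnt_subSW, hq, cntW_append, cntW_append, cnt_embW, cnt_embW]
  simp [starW, cntW, cntL]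

def subf (u : M X) : Option X → M X := fun o => Option.elim o u (fun x => [Letter.of x])

theorem sub_def (q : M (Option X)) (u : M X) : sub q u = bindW q (subf u) := rfl

mutual
theorem sub0L (l : Letter (Option X)) (h : cntL (fun o => o.isNone) l = 0) (u u' : M X) :
    bindL l (subf u) = bindL l (subf u') := by
  cases l with
  | of o => cases o with
    | none => simp [cntL] at h
    | some x => rfl
  | br w =>
    simp only [cntL] at h
    simp [bindL, sub0W w h u u']
theorem sub0W (q : M (Option X)) (h : cntW (fun o => o.isNone) q = 0) (u u' : M X) :
    bindW q (subf u) = bindW q (subf u') := by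
  cases q with
  | nil => rfl
  | cons a as =>
    simp only [cntW, Nat.add_eq_zero] at h
    simp [bindW, sub0L a h.1 u u', sub0W as h.2 u u']
end

mutual
theorem sub1L (l : Letter (Option X)) (h : cntL (fun o => o.isNone) l = 1) (u u' : M X)
    (he : bindL l (subf u) = bindL l (subf u')) : u = u' := by
  cases l with
  | of o => cases o with
    | none => simpa [bindL, subf] using he
    | some x => simp [cntL] at h
  | br w =>
    simp only [cntL] at h
    simp only [bindL, List.cons.injEq, Letter.br.injEq, and_true] at he
    exact sub1W w h u u' he
theorem sub1W (q : M (Option X)) (h : cntW (fun o => o.isNone) q = 1) (u u' : M X)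
    (he : bindW q (subf u) = bindW q (subf u')) : u = u' := by
  cases q with
  | nil => simp [cntW] at h
  | cons a as =>
    simp only [bindW] at he
    simp only [cntW] at h
    by_cases h1 : cntL (fun o : Option X => o.isNone) a = 0
    · have h2 : cntW (fun o : Option X => o.isNone) as = 1 := by omega
      rw [sub0L a h1 u u'] at he
      exact sub1W as h2 u u' (List.append_cancel_left he)
    · have h2 : cntL (fun o : Option X => o.isNone) a = 1 ∧
          cntW (fun o : Option X => o.isNone) as = 0 := by omega
      rw [sub0W as h2.2 u u'] at he
      exact sub1L a h2.1 u u' (List.append_cancel_right he)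
end

theorem sub_inj {q : M (Option X)} (hq : IsStar q) {u u' : M X}
    (h : sub q u = sub q u') : u = u' :=
  sub1W q hq u u' h

end Aux


section Rewx
variable {X : Type}

theorem rule1 (w : M X) : (L (L w), w) ∈ SGrp X := Or.inl ⟨w, rfl⟩
theorem rule2 {u v : M X} (hu : u ≠ []) (hv : v ≠ []) :
    (L (u ++ v), L v ++ L u) ∈ SGrp X := Or.inr (Or.inl ⟨u, v, hu, hv, rfl⟩)
theorem rule3 (w : M X) : (L w ++ w, []) ∈ SGrp X := Or.inr (Or.inr (Or.inl ⟨w, rfl⟩))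
theorem rule4 (w : M X) : (w ++ L w, []) ∈ SGrp X := Or.inr (Or.inr (Or.inr ⟨w, rfl⟩))

variable {lt : M X → M X → Prop} {q : M (Option X)}

theorem rew_rule (hor : ∀ p ∈ SGrp X, lt p.2 p.1) (hq : IsStar q)
    {t v : M X} (hr : (t, v) ∈ SGrp X)
    (p s : M X) {A B : M X} (hA : A = p ++ t ++ s) (hB : B = p ++ v ++ s) :
    Rew lt (SGrp X) (sub q A) (sub q B) := by
  refine ⟨subS q (emb p ++ starW ++ emb s), t, v, isStar_ctx hq p s, Or.inl hr, hor _ hr, ?_⟩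
  rw [sub_ctx, sub_ctx, hA, hB]

theorem rt_rule (hor : ∀ p ∈ SGrp X, lt p.2 p.1) (hq : IsStar q)
    {t v : M X} (hr : (t, v) ∈ SGrp X)
    (p s : M X) {A B : M X} (hA : A = p ++ t ++ s) (hB : B = p ++ v ++ s) :
    Relation.ReflTransGen (Rew lt (SGrp X)) (sub q A) (sub q B) :=
  Relation.ReflTransGen.single (rew_rule hor hq hr p s hA hB)

theorem rt_refl (hA : A = B) :
    Relation.ReflTransGen (Rew lt (SGrp X)) (sub q A) (sub q B) :=
  hA ▸ Relation.ReflTransGen.refl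

/-- `⌊u++r⌋ u →* ⌊r⌋` in context. -/
theorem stepD (hor : ∀ p ∈ SGrp X, lt p.2 p.1) (hq : IsStar q)
    (u r p s : M X) (hr : r ≠ []) {A B : M X}
    (hA : A = p ++ L (u ++ r) ++ (u ++ s)) (hB : B = p ++ L r ++ s) :
    Relation.ReflTransGen (Rew lt (SGrp X)) (sub q A) (sub q B) := by
  rcases eq_or_ne u [] with rfl | hu
  · exact rt_refl (by rw [hA, hB]; simp)
  · refine Relation.ReflTransGen.head
      (rew_rule hor hq (rule2 hu hr) p (u ++ s) (by rw [hA]) rfl) ?_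
    exact rt_rule hor hq (rule3 u) (p ++ L r) s (by simp) (by rw [hB]; simp)

/-- `r ⌊u++r⌋ →* ⌊u⌋` in context. -/
theorem stepD' (hor : ∀ p ∈ SGrp X, lt p.2 p.1) (hq : IsStar q)
    (u r p s : M X) (hu : u ≠ []) {A B : M X}
    (hA : A = p ++ (r ++ (L (u ++ r) ++ s))) (hB : B = p ++ L u ++ s) :
    Relation.ReflTransGen (Rew lt (SGrp X)) (sub q A) (sub q B) := by
  rcases eq_or_ne r [] with rfl | hr
  · exact rt_refl (by rw [hA, hB]; simp)
  · refine Relation.ReflTransGen.head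
      (rew_rule hor hq (rule2 hu hr) (p ++ r) s (by rw [hA]; simp) rfl) ?_
    exact rt_rule hor hq (rule4 r) p (L u ++ s) (by simp) (by rw [hB]; simp)

/-- `⌊⌊m++c⌋ m⌋ →* c` in context. -/
theorem stepG (hor : ∀ p ∈ SGrp X, lt p.2 p.1) (hq : IsStar q)
    (m c p s : M X) {A B : M X}
    (hA : A = p ++ L (L (m ++ c) ++ m) ++ s) (hB : B = p ++ (c ++ s)) :
    Relation.ReflTransGen (Rew lt (SGrp X)) (sub q A) (sub q B) := by
  rcases eq_or_ne m [] with rfl | hm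
  · exact rt_rule hor hq (rule1 c) p s (by rw [hA]; simp) (by rw [hB]; simp)
  · refine Relation.ReflTransGen.head
      (rew_rule hor hq (rule2 (by simp [L] : L (m ++ c) ≠ []) hm) p s (by rw [hA]) rfl) ?_
    refine Relation.ReflTransGen.head
      (rew_rule hor hq (rule1 (m ++ c)) (p ++ L m) s (by simp) rfl) ?_
    exact rt_rule hor hq (rule3 m) p (c ++ s) (by simp) (by rw [hB]; simp)

end Rewx


section Core
variable {X : Type}

mutual
def sizeL : Letter X → ℕ
  | .of _ => 1
  | .br w => 1 + sizeW w
def sizeW : M X → ℕ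
  | [] => 0
  | a :: as => sizeL a + sizeW as
end

theorem sizeW_append (u v : M X) : sizeW (u ++ v) = sizeW u + sizeW v := by
  induction u with
  | nil => simp [sizeW]
  | cons a as ih => simp [sizeW, ih]; omega

theorem split_cons {a b l : M X} {x : Letter X} (h : a ++ b = x :: l) (ha : a ≠ []) :
    ∃ a', a = x :: a' ∧ a' ++ b = l := by
  cases a with
  | nil => exact absurd rfl ha
  | cons y a' =>
    simp only [List.cons_append, List.cons.injEq] at h
    exact ⟨a', by rw [h.1], h.2⟩

theorem split_snoc {a b l : M X} {x : Letter X} (h : a ++ b = l ++ [x]) (hb : b ≠ []) :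
    ∃ b', b = b' ++ [x] ∧ a ++ b' = l := by
  rcases List.eq_nil_or_concat b with rfl | ⟨b', y, rfl⟩
  · exact absurd rfl hb
  · simp only [List.concat_eq_append] at h ⊢
    have h' : (a ++ b') ++ [y] = l ++ [x] := by simpa [List.append_assoc] using h
    obtain ⟨h1, h2⟩ := List.append_inj' h' rfl
    simp only [List.cons.injEq, and_true] at h2
    exact ⟨b', by rw [h2], h1⟩

theorem len_one {a b : M X} {x : Letter X} (h : a ++ b = [x]) (ha : a ≠ []) (hb : b ≠ []) :
    False := by
  have := congrArg List.length h
  simp at this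
  have h1 : 0 < a.length := List.length_pos_iff.mpr ha
  have h2 : 0 < b.length := List.length_pos_iff.mpr hb
  omega

theorem core {lt : M X → M X → Prop} (hor : ∀ p ∈ SGrp X, lt p.2 p.1)
    (α β : M X × M X) (hα : α ∈ SGrp X) (hβ : β ∈ SGrp X)
    {q : M (Option X)} (hq : IsStar q) (a b c : M X)
    (ha : a ≠ []) (hb : b ≠ []) (hc : c ≠ [])
    (h1 : a ++ b = α.1) (h2 : b ++ c = β.1) :
    Joinable lt (SGrp X) (sub q (α.2 ++ c)) (sub q (a ++ β.2)) := by
  obtain ⟨α1, α2⟩ := α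
  obtain ⟨β1, β2⟩ := β
  simp only at h1 h2 ⊢
  rcases hα with ⟨w, hw⟩ | ⟨u, v, hu, hv, hw⟩ | ⟨w, hw⟩ | ⟨w, hw⟩ <;>
    simp only [Prod.mk.injEq] at hw <;> obtain ⟨rfl, rfl⟩ := hw
  · -- α = (L (L w), w): lhs a single letter, impossible
    exact absurd (by simpa [L] using h1) (fun h => len_one h ha hb)
  · exact absurd (by simpa [L] using h1) (fun h => len_one h ha hb)
  · -- α = (L w ++ w, [])
    have h1' : a ++ b = Letter.br w :: w := by simpa [L] using h1
    obtain ⟨s, rfl, hsw⟩ := split_cons h1' ha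
    rcases hβ with ⟨w', hw'⟩ | ⟨u, v, hu, hv, hw'⟩ | ⟨w', hw'⟩ | ⟨w', hw'⟩ <;>
      simp only [Prod.mk.injEq] at hw' <;> obtain ⟨rfl, rfl⟩ := hw'
    · exact absurd (by simpa [L] using h2) (fun h => len_one h hb hc)
    · exact absurd (by simpa [L] using h2) (fun h => len_one h hb hc)
    · -- case (3,3)
      have h2' : b ++ c = Letter.br w' :: w' := by simpa [L] using h2
      obtain ⟨m, rfl, hmw⟩ := split_cons h2' hb
      refine ⟨sub q c, rt_refl (by simp), ?_⟩
      refine Relation.ReflTransGen.trans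
        (stepD hor hq s (Letter.br w' :: m) [] []
          (by simp)
          (show Letter.br w :: s ++ [] = [] ++ L (s ++ Letter.br w' :: m) ++ (s ++ []) by
            rw [← hsw]; simp [L])
          rfl) ?_
      exact stepG hor hq m c [] []
        (show [] ++ L (Letter.br w' :: m) ++ [] = [] ++ L (L (m ++ c) ++ m) ++ [] by
          rw [← hmw]; simp [L]) (by simp)
    · -- case (3,4)
      obtain ⟨c', rfl, hcw⟩ := split_snoc (show b ++ c = w' ++ [Letter.br w'] by
        simpa [L] using h2) hc
      refine ⟨sub q (L b), ?_, ?_⟩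
      · exact stepD' hor hq b c' [] [] hb
          (show [] ++ (c' ++ [Letter.br w']) = [] ++ (c' ++ (L (b ++ c') ++ [])) by
            rw [← hcw]; simp [L]) (by simp)
      · exact stepD hor hq s b [] [] hb
          (show Letter.br w :: s ++ [] = [] ++ L (s ++ b) ++ (s ++ []) by
            rw [← hsw]; simp [L]) (by simp)
  · -- α = (w ++ L w, [])
    obtain ⟨b1, rfl, hbw⟩ := split_snoc (show a ++ b = w ++ [Letter.br w] by
      simpa [L] using h1) hb
    rcases hβ with ⟨w', hw'⟩ | ⟨u, v, hu, hv, hw'⟩ | ⟨w', hw'⟩ | ⟨w', hw'⟩ <;>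
      simp only [Prod.mk.injEq] at hw' <;> obtain ⟨rfl, rfl⟩ := hw'
    · exact absurd (by simpa [L] using h2) (fun h => len_one h hb hc)
    · exact absurd (by simpa [L] using h2) (fun h => len_one h hb hc)
    · -- case (4,3)
      have h2' : (b1 ++ [Letter.br w]) ++ c = Letter.br w' :: w' := by simpa [L] using h2
      rcases eq_or_ne b1 [] with rfl | hb1
      · -- b = [⌊w⌋], so w = w', c = w', a = w
        simp only [List.nil_append, List.cons_append, List.cons.injEq, Letter.br.injEq]
          at h2'
        obtain ⟨rfl, h2c⟩ := h2'
        refine ⟨sub q c, rt_refl (by simp), rt_refl (by rw [hbw]; exact h2c.symm)⟩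
      · -- size contradiction
        exfalso
        obtain ⟨m', hm1, hm2⟩ := split_cons h2' (by simp)
        obtain ⟨m'', rfl, hm3⟩ := split_cons hm1 hb1
        -- b1 = ⌊w'⌋ :: m'', m'' ++ [⌊w⌋] ++ c = w', a ++ b1 = w
        have e1 : sizeW w' = sizeW m'' + (1 + sizeW w) + sizeW c := by
          rw [← hm2, ← hm3]
          simp [sizeW_append, sizeW, sizeL]
          omega
        have e2 : sizeW w = sizeW a + (1 + sizeW w') + sizeW m'' := by
          rw [← hbw]
          simp [sizeW_append, sizeW, sizeL]
          omega
        omega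
    · -- case (4,4)
      obtain ⟨c', rfl, hcw⟩ := split_snoc (show (b1 ++ [Letter.br w]) ++ c = w' ++ [Letter.br w'] by
        simpa [L] using h2) hc
      -- w' = b1 ++ [⌊w⌋] ++ c', w = a ++ b1
      refine ⟨sub q a, ?_, rt_refl (by simp)⟩
      rcases eq_or_ne b1 [] with rfl | hb1
      · -- w = a, w' = ⌊a⌋ :: c'
        simp only [List.nil_append] at hbw hcw
        subst hbw
        refine Relation.ReflTransGen.trans
          (stepD' hor hq (L a) c' [] [] (by simp [L])
            (show [] ++ (c' ++ [Letter.br w']) = [] ++ (c' ++ (L (L a ++ c') ++ [])) by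
              rw [← hcw]; simp [L]) rfl) ?_
        exact rt_rule hor hq (rule1 a) [] [] (by simp) (by simp)
      · refine Relation.ReflTransGen.trans
          (stepD' hor hq (b1 ++ [Letter.br w]) c' [] [] (by simp)
            (show [] ++ (c' ++ [Letter.br w']) = [] ++ (c' ++ (L ((b1 ++ [Letter.br w]) ++ c') ++ [])) by
              rw [← hcw]; simp [L]) rfl) ?_
        refine Relation.ReflTransGen.head
          (rew_rule hor hq (rule2 hb1 (by simp [L] : L w ≠ [])) [] []
            (show [] ++ L (b1 ++ [Letter.br w]) ++ [] = [] ++ L (b1 ++ L w) ++ [] by simp [L])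
            rfl) ?_
        refine Relation.ReflTransGen.head
          (rew_rule hor hq (rule1 w) [] (L b1)
            (show [] ++ (L (L w) ++ L b1) ++ [] = [] ++ L (L w) ++ L b1 by simp) rfl) ?_
        exact rt_rule hor hq (rule4 b1) a []
          (show [] ++ w ++ L b1 = a ++ (b1 ++ L b1) ++ [] by rw [← hbw]; simp)
          (by simp)

end Core

/-- intersecting placements of group rules are joinable. -/
theorem sgrp_intersecting_joinable (X : Type) (lt : M X → M X → Prop)
    (hlt : IsMonomialOrder lt) (hor : ∀ p ∈ SGrp X, lt p.2 p.1)
    (α β : M X × M X) (hα : α ∈ SGrp X) (hβ : β ∈ SGrp X)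
    (q₁ q₂ : M (Option X)) (hq₁ : IsStar q₁) (hq₂ : IsStar q₂)
    (h : sub q₁ α.1 = sub q₂ β.1)
    (hint : Intersecting (sub q₁ α.1) α.1 q₁ β.1 q₂) :
    Joinable lt (SGrp X) (sub q₁ α.2) (sub q₂ β.2) := by
  obtain ⟨q, a, b, c, hq, ha, hb, hc, hw, hcase⟩ := hint
  rcases hcase with ⟨e1, e2⟩ | ⟨e1, e2⟩
  · subst e1; subst e2
    rw [sub_ctxL] at hw h ⊢
    rw [sub_ctxR] at h ⊢
    have hα1 : a ++ b = α.1 := (List.append_cancel_right (sub_inj hq hw)).symm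
    have hβ1 : b ++ c = β.1 := by
      have h2 : a ++ β.1 = a ++ (b ++ c) := by
        rw [sub_inj hq (h.symm.trans hw), List.append_assoc]
      exact (List.append_cancel_left h2).symm
    exact core hor α β hα hβ hq a b c ha hb hc hα1 hβ1
  · subst e1; subst e2
    rw [sub_ctxR] at hw h ⊢
    rw [sub_ctxL] at h ⊢
    have hα1 : b ++ c = α.1 := by
      have h1 : a ++ α.1 = a ++ (b ++ c) := by
        rw [sub_inj hq hw, List.append_assoc]
      exact (List.append_cancel_left h1).symm
    have hβ1 : a ++ b = β.1 := (List.append_cancel_right (sub_inj hq (h.symm.trans hw))).symm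
    obtain ⟨j, r1, r2⟩ := core hor β α hβ hα hq a b c ha hb hc hβ1 hα1
    exact ⟨j, r2, r1⟩

end OpMon
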